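/- If an n-Brinkhuis k-triple exists and s = lim_{m→∞} (s_m)^{1/m} denotes the growth rate of ternary squarefree words, then s ≥ k^{1/(n-1)}. -/

import Mathlib

/-- A word is squarefree if it contains no factor `x ++ x` with `x` nonempty. -/
def IsSquarefreeWord {α : Type*} (w : List α) : Prop :=
  ∀ x : List α, x ≠ [] → ¬ ∃ a b : List α, w = a ++ x ++ x ++ b

/-- The number of ternary squarefree words of length `n`. -/
noncomputable def sCount (n : ℕ) : ℕ :=
  {w : List (Fin 3) | w.length = n ∧ IsSquarefreeWord w}.ncard

/-- An `n`-Brinkhuis `k`-triple: three families of `k` distinct squarefree ternary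
words of length `n` such that substituting the three families for the three letters
of any squarefree word of length 3 always yields a squarefree word. -/
def IsBrinkhuisTriple (n k : ℕ) (B : Fin 3 → Fin k → List (Fin 3)) : Prop :=
  (∀ (i : Fin 3) (j : Fin k), (B i j).length = n ∧ IsSquarefreeWord (B i j)) ∧
  (∀ i : Fin 3, Function.Injective (B i)) ∧
  (∀ i₁ i₂ i₃ : Fin 3, IsSquarefreeWord [i₁, i₂, i₃] →
    ∀ j₁ j₂ j₃ : Fin k, IsSquarefreeWord (B i₁ j₁ ++ B i₂ j₂ ++ B i₃ j₃))

/-!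
Substituting the words of a Brinkhuis triple for the letters of a squarefree word over
`Fin 3 × Fin k` (a letter together with the index of the word chosen for it) yields a squarefree
word. A square `x x` in the image either fits into three consecutive blocks, or some block lies
inside one copy of `x` and reappears at distance `|x|`. If `n ∤ |x|` that second occurrence
straddles two blocks, which the triple property forbids. If `n ∣ |x|`, the blocks inside the first
copy are repeated `|x| / n` blocks later, so either the preimage contains a square or the block
where the two copies of `x` meet is glued from the two blocks `|x| / n` positions away, again
forbidden. Counting the images gives `k ^ m * s_m ≤ s_{mn}`, hence
`k ^ (1 + n + ⋯ + n ^ (t - 1)) ≤ s_{n ^ t}`; taking `n ^ t`-th roots gives `k ^ (1 / (n - 1)) ≤ s`.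
-/

open Function

section Squarefree

variable {α : Type*}

theorem isSquarefreeWord_iff_infix {w : List α} :
    IsSquarefreeWord w ↔ ∀ x : List α, x ≠ [] → ¬ x ++ x <:+: w := by
  refine forall_congr' fun x => imp_congr Iff.rfl (not_congr ⟨?_, ?_⟩) <;>
    rintro ⟨a, b, rfl⟩ <;> exact ⟨a, b, by simp⟩

theorem IsSquarefreeWord.of_infix {v w : List α} (hw : IsSquarefreeWord w) (h : v <:+: w) :
    IsSquarefreeWord v := by
  rw [isSquarefreeWord_iff_infix] at hw ⊢
  exact fun x hx hv => hw x hx (hv.trans h)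

theorem isSquarefreeWord_of_length_le_one {w : List α} (hw : w.length ≤ 1) :
    IsSquarefreeWord w := by
  rintro x hx ⟨a, b, rfl⟩
  simp only [List.length_append] at hw
  exact hx (List.length_eq_zero_iff.mp (by omega))

theorem isSquarefreeWord_triple {a b c : α} (hab : a ≠ b) (hbc : b ≠ c) :
    IsSquarefreeWord [a, b, c] := by
  rintro x hx ⟨u, v, huv⟩
  have hlen := congrArg List.length huv
  simp only [List.length_cons, List.length_nil, List.length_append] at hlen
  obtain ⟨d, rfl⟩ : ∃ d, x = [d] :=
    List.length_eq_one_iff.mp (by have := List.length_pos_iff.mpr hx; omega)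
  rcases u with _ | ⟨e, _ | ⟨e', u⟩⟩
  · simp only [List.nil_append, List.cons_append, List.cons.injEq] at huv
    exact hab (huv.1.trans huv.2.1.symm)
  · simp only [List.cons_append, List.nil_append, List.cons.injEq] at huv
    exact hbc (huv.2.1.trans huv.2.2.1.symm)
  · simp only [List.length_cons, List.length_nil] at hlen
    omega

theorem not_isSquarefreeWord_of_getElem_eq {w : List α} {c q : ℕ} (hq : 0 < q)
    (hlen : c + 2 * q ≤ w.length)
    (h : ∀ t (h₁ : t < w.length) (h₂ : t + q < w.length), c ≤ t → t < c + q → w[t] = w[t + q]) :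
    ¬ IsSquarefreeWord w := by
  set x := (w.drop c).take q
  have hx : x.length = q := by
    simp only [x, List.length_take, List.length_drop]
    omega
  have hshift : (w.drop (c + q)).take q = x := by
    refine List.ext_getElem? fun i => ?_
    simp only [x, List.getElem?_take, List.getElem?_drop]
    split_ifs with hi
    · have := h (c + i) (by omega) (by omega) (by omega) (by omega)
      simp only [add_right_comm c i q] at this
      rw [List.getElem?_eq_getElem (by omega), List.getElem?_eq_getElem (by omega), this]
    · rfl
  refine fun hw => hw x (fun h => by simp only [h, List.length_nil] at hx; omega)
    ⟨w.take c, w.drop (c + 2 * q), ?_⟩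
  conv_lhs => rw [← List.take_append_drop c w, ← List.take_append_drop q (w.drop c),
    List.drop_drop, ← List.take_append_drop q (w.drop (c + q)), List.drop_drop, hshift]
  simp [x, two_mul, add_assoc]

theorem IsSquarefreeWord.getElem_ne_getElem_add_one {w : List α} (hw : IsSquarefreeWord w)
    {i : ℕ} (hi : i + 1 < w.length) : w[i] ≠ w[i + 1] := fun h =>
  not_isSquarefreeWord_of_getElem_eq (c := i) one_pos (by omega)
    (fun t _ _ hit hti => by
      obtain rfl : t = i := by omega
      exact h) hw

end Squarefree

section Lists

variable {α : Type*} {a x b : List α}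

theorem take_drop_infix_take_drop (y : List α) {i j i' j' : ℕ} (hi : i' ≤ i)
    (hj : i + j ≤ i' + j') : (y.drop i).take j <:+: (y.drop i').take j' := by
  have : (y.drop i).take j = (((y.drop i').take j').drop (i - i')).take j := by
    rw [List.drop_take, List.drop_drop, List.take_take, Nat.add_sub_cancel' hi]
    congr 1
    omega
  rw [this]
  exact (List.take_prefix _ _).isInfix.trans (List.drop_suffix _ _).isInfix

theorem take_drop_eq_take_drop_add_of_square {i len : ℕ} (hi : a.length ≤ i)
    (hil : i + len ≤ a.length + x.length) :
    ((a ++ x ++ x ++ b).drop i).take len = ((a ++ x ++ x ++ b).drop (i + x.length)).take len := by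
  obtain ⟨d, rfl⟩ := Nat.exists_eq_add_of_le hi
  have hlen : len ≤ (x.drop d).length := by rw [List.length_drop]; omega
  rw [add_right_comm, ← List.drop_drop, ← List.drop_drop, ← List.drop_drop,
    List.append_assoc, List.append_assoc, List.drop_left, List.drop_left,
    List.drop_append_of_le_length (by omega), List.drop_append_of_le_length (by omega),
    List.take_append_of_le_length hlen, List.take_append_of_le_length hlen]

theorem ncard_setOf_length_eq [Fintype α] (m : ℕ) :
    {l : List α | l.length = m}.ncard = Fintype.card α ^ m := by
  rw [← Nat.card_coe_set_eq, ← card_vector, ← Nat.card_eq_fintype_card]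
  rfl

end Lists

section UniformFlatMap

variable {β γ : Type*} {f : γ → List β} {n : ℕ}

theorem length_flatMap_of_length_eq (hf : ∀ c, (f c).length = n) (l : List γ) :
    (l.flatMap f).length = l.length * n := by
  simp [List.length_flatMap, hf]

theorem drop_flatMap_mul (hf : ∀ c, (f c).length = n) (l : List γ) (t : ℕ) :
    (l.flatMap f).drop (t * n) = (l.drop t).flatMap f := by
  induction t generalizing l with
  | zero => simp
  | succ t ih =>
    cases l with
    | nil => simp
    | cons c l =>
      rw [List.flatMap_cons, add_mul, one_mul, add_comm, ← List.drop_drop,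
        List.drop_left' (hf c), ih, List.drop_succ_cons]

theorem take_flatMap_mul (hf : ∀ c, (f c).length = n) (l : List γ) (t : ℕ) :
    (l.flatMap f).take (t * n) = (l.take t).flatMap f := by
  induction t generalizing l with
  | zero => simp
  | succ t ih =>
    cases l with
    | nil => simp
    | cons c l =>
      rw [List.flatMap_cons, List.take_succ_cons, List.flatMap_cons, List.take_append,
        List.take_of_length_le (by rw [hf c]; nlinarith), hf c, add_mul, one_mul,
        Nat.add_sub_cancel, ih]

theorem take_drop_flatMap_mul (hf : ∀ c, (f c).length = n) (l : List γ) (t u : ℕ) :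
    ((l.flatMap f).drop (t * n)).take (u * n) = ((l.drop t).take u).flatMap f := by
  rw [drop_flatMap_mul hf, take_flatMap_mul hf]

theorem take_drop_flatMap_eq_getElem (hf : ∀ c, (f c).length = n) {l : List γ} {t : ℕ}
    (ht : t < l.length) : ((l.flatMap f).drop (t * n)).take n = f l[t] := by
  rw [drop_flatMap_mul hf, List.drop_eq_getElem_cons ht, List.flatMap_cons,
    List.take_left' (hf _)]

theorem take_drop_flatMap_eq_drop_append_take (hf : ∀ c, (f c).length = n) {l : List γ}
    {t r : ℕ} (ht : t + 1 < l.length) (hr : r ≤ n) :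
    ((l.flatMap f).drop (t * n + r)).take n = (f l[t]).drop r ++ (f l[t + 1]).take r := by
  rw [← List.drop_drop, drop_flatMap_mul hf,
    List.drop_eq_getElem_cons (show t < l.length by omega), List.drop_eq_getElem_cons ht,
    List.flatMap_cons, List.flatMap_cons,
    List.drop_append_of_le_length (by rw [hf]; exact hr), List.take_append, List.length_drop, hf,
    List.take_of_length_le (by simp [hf]), List.take_append_of_le_length (by rw [hf]; omega)]
  congr 2
  omega

theorem flatMap_injective (hf : ∀ c, (f c).length = n) (hn : 0 < n) (hinj : Injective f) :
    Injective (List.flatMap f) := by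
  intro l l' h
  have hlen : l.length = l'.length := Nat.eq_of_mul_eq_mul_right hn (by
    rw [← length_flatMap_of_length_eq hf, ← length_flatMap_of_length_eq hf, h])
  induction l generalizing l' with
  | nil => exact (List.length_eq_zero_iff.mp hlen.symm).symm
  | cons c l ih =>
    obtain _ | ⟨c', l'⟩ := l'
    · simp at hlen
    rw [List.flatMap_cons, List.flatMap_cons] at h
    have hc := congrArg (List.take n) h
    have hl := congrArg (List.drop n) h
    rw [List.take_left' (hf c), List.take_left' (hf c')] at hc
    rw [List.drop_left' (hf c), List.drop_left' (hf c')] at hl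
    rw [hinj hc, ih hl (by simpa using hlen)]

end UniformFlatMap

namespace IsBrinkhuisTriple

variable {n k : ℕ} {B : Fin 3 → Fin k → List (Fin 3)}

theorem length_eq (hB : IsBrinkhuisTriple n k B) (p : Fin 3 × Fin k) :
    (uncurry B p).length = n :=
  (hB.1 p.1 p.2).1

theorem isSquarefreeWord_append (hB : IsBrinkhuisTriple n k B) {p₁ p₂ : Fin 3 × Fin k}
    (h : p₁.1 ≠ p₂.1) : IsSquarefreeWord (uncurry B p₁ ++ uncurry B p₂) := by
  obtain ⟨i, hi⟩ := exists_ne p₂.1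
  exact (hB.2.2 _ _ _ (isSquarefreeWord_triple h hi.symm) p₁.2 p₂.2 p₁.2).of_infix
    (List.prefix_append _ _).isInfix

theorem injective_uncurry (hB : IsBrinkhuisTriple n k B) (hn : 0 < n) :
    Injective (uncurry B) := by
  rintro ⟨i₁, j₁⟩ ⟨i₂, j₂⟩ h
  by_cases hi : i₁ = i₂
  · subst hi
    exact Prod.ext rfl (hB.2.1 i₁ h)
  · refine (hB.isSquarefreeWord_append (p₁ := (i₁, j₁)) (p₂ := (i₂, j₂)) hi (B i₂ j₂)
      (fun h0 => ?_) ⟨[], [], by rw [h]; simp⟩).elim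
    have := hB.length_eq (i₂, j₂)
    simp only [uncurry_apply_pair, h0, List.length_nil] at this
    omega

theorem isSquarefreeWord_flatMap_of_length_le_three (hB : IsBrinkhuisTriple n k B)
    {l : List (Fin 3 × Fin k)} (hl : IsSquarefreeWord (l.map Prod.fst)) (h3 : l.length ≤ 3) :
    IsSquarefreeWord (l.flatMap (uncurry B)) := by
  have hne : ∀ p₁ p₂ : Fin 3 × Fin k, [p₁, p₂] <:+: l → p₁.1 ≠ p₂.1 := fun p₁ p₂ h =>
    (hl.of_infix (h.map Prod.fst)).getElem_ne_getElem_add_one (i := 0) (by simp)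
  match l, h3 with
  | [], _ => exact isSquarefreeWord_of_length_le_one (by simp)
  | [p], _ => simpa using (show IsSquarefreeWord (uncurry B p) from (hB.1 p.1 p.2).2)
  | [p₁, p₂], _ => simpa using hB.isSquarefreeWord_append (hne p₁ p₂ (List.infix_refl _))
  | [p₁, p₂, p₃], _ =>
    have := hB.2.2 _ _ _ (isSquarefreeWord_triple (hne p₁ p₂ ⟨[], [p₃], rfl⟩)
      (hne p₂ p₃ ⟨[p₁], [], rfl⟩)) p₁.2 p₂.2 p₃.2
    simp only [List.flatMap_cons, List.flatMap_nil, List.append_nil, ← List.append_assoc]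
    exact this

theorem ne_drop_append_take (hB : IsBrinkhuisTriple n k B) {r : ℕ} (hr : 0 < r) (hrn : r < n)
    {p₁ p₂ : Fin 3 × Fin k} (h : p₁.1 ≠ p₂.1) (p : Fin 3 × Fin k) :
    uncurry B p ≠ (uncurry B p₁).drop r ++ (uncurry B p₂).take r := by
  intro hp
  set V := uncurry B p₁
  set W := uncurry B p₂
  by_cases hp₁ : p.1 = p₁.1
  · refine hB.isSquarefreeWord_append (hp₁ ▸ h) (W.take r) (fun h0 => ?_)
      ⟨V.drop r, W.drop r, ?_⟩
    · have := congrArg List.length h0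
      simp only [W, List.length_take, hB.length_eq, List.length_nil] at this
      omega
    · calc uncurry B p ++ W = (V.drop r ++ W.take r) ++ (W.take r ++ W.drop r) := by
            rw [List.take_append_drop, hp]
        _ = _ := by simp only [List.append_assoc]
  · refine hB.isSquarefreeWord_append (Ne.symm hp₁) (V.drop r) (fun h0 => ?_)
      ⟨V.take r, W.take r, ?_⟩
    · have := congrArg List.length h0
      simp only [V, List.length_drop, hB.length_eq, List.length_nil] at this
      omega
    · calc V ++ uncurry B p = (V.take r ++ V.drop r) ++ (V.drop r ++ W.take r) := by
            rw [List.take_append_drop, hp]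
        _ = _ := by simp only [List.append_assoc]

theorem ne_take_append_drop (hB : IsBrinkhuisTriple n k B) {r : ℕ} (hrn : r < n)
    {p₁ p₂ p₃ : Fin 3 × Fin k} (h₁ : p₁.1 ≠ p₂.1) (h₂ : p₂.1 ≠ p₃.1) :
    uncurry B p₂ ≠ (uncurry B p₃).take r ++ (uncurry B p₁).drop r := by
  intro hp
  set V := uncurry B p₁
  set X := uncurry B p₃
  refine hB.2.2 _ _ _ (isSquarefreeWord_triple h₁ h₂) p₁.2 p₂.2 p₃.2
    (V.drop r ++ X.take r) (fun h0 => ?_) ⟨V.take r, X.drop r, ?_⟩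
  · have := congrArg List.length h0
    simp only [V, List.length_append, List.length_drop, hB.length_eq, List.length_nil] at this
    omega
  · calc V ++ uncurry B p₂ ++ X
        = (V.take r ++ V.drop r) ++ (X.take r ++ V.drop r) ++ (X.take r ++ X.drop r) := by
          rw [List.take_append_drop, List.take_append_drop, hp]
      _ = _ := by simp only [List.append_assoc]

variable {l : List (Fin 3 × Fin k)} {a x b : List (Fin 3)}

theorem fst_getElem_ne_fst_getElem_add_one (hl : IsSquarefreeWord (l.map Prod.fst)) {s : ℕ}
    (hs : s + 1 < l.length) : l[s].1 ≠ l[s + 1].1 := by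
  have := hl.getElem_ne_getElem_add_one (i := s) (by simpa using hs)
  rwa [List.getElem_map, List.getElem_map] at this

theorem uncurry_ne_take_drop_flatMap (hB : IsBrinkhuisTriple n k B)
    (hl : IsSquarefreeWord (l.map Prod.fst)) {t s r : ℕ} (ht : t < l.length)
    (hs : s + 1 < l.length) (hr : 0 < r) (hrn : r < n) :
    uncurry B l[t] ≠ ((l.flatMap (uncurry B)).drop (s * n + r)).take n := by
  rw [take_drop_flatMap_eq_drop_append_take hB.length_eq hs hrn.le]
  exact hB.ne_drop_append_take hr hrn (fst_getElem_ne_fst_getElem_add_one hl hs) _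

theorem flatMap_ne_square_of_block_inside_left (hB : IsBrinkhuisTriple n k B)
    (hl : IsSquarefreeWord (l.map Prod.fst)) {q r : ℕ} (hL : x.length = q * n + r) (hr : 0 < r)
    (hrn : r < n) {t : ℕ} (ht₁ : a.length ≤ t * n) (ht₂ : t * n + n ≤ a.length + x.length) :
    l.flatMap (uncurry B) ≠ a ++ x ++ x ++ b := by
  intro hy
  have hlen := congrArg List.length hy
  simp only [length_flatMap_of_length_eq hB.length_eq, List.length_append] at hlen
  have ht : t < l.length := Nat.lt_of_mul_lt_mul_right (a := n) (by omega)
  have hs : t + q + 1 < l.length := Nat.lt_of_mul_lt_mul_right (a := n) (by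
    rw [add_mul, add_mul, one_mul]; omega)
  refine hB.uncurry_ne_take_drop_flatMap hl ht hs hr hrn ?_
  rw [← take_drop_flatMap_eq_getElem hB.length_eq ht, hy,
    take_drop_eq_take_drop_add_of_square ht₁ ht₂, hL, add_mul, add_assoc]

theorem flatMap_ne_square_of_block_inside_right (hB : IsBrinkhuisTriple n k B)
    (hl : IsSquarefreeWord (l.map Prod.fst)) {q r : ℕ} (hL : x.length = q * n + r) (hr : 0 < r)
    (hrn : r < n) {t : ℕ} (ht₁ : a.length + x.length ≤ t * n)
    (ht₂ : t * n + n ≤ a.length + 2 * x.length) :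
    l.flatMap (uncurry B) ≠ a ++ x ++ x ++ b := by
  intro hy
  have hlen := congrArg List.length hy
  simp only [length_flatMap_of_length_eq hB.length_eq, List.length_append] at hlen
  have ht : t < l.length := Nat.lt_of_mul_lt_mul_right (a := n) (by omega)
  obtain ⟨s, rfl⟩ : ∃ s, t = s + q + 1 := ⟨t - q - 1, by
    have : q < t := Nat.lt_of_mul_lt_mul_right (a := n) (by omega)
    omega⟩
  have hstart : (s + q + 1) * n = s * n + (n - r) + x.length := by
    rw [add_mul, add_mul, one_mul]; omega
  refine hB.uncurry_ne_take_drop_flatMap hl ht (s := s) (r := n - r) (by omega) (by omega)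
    (by omega) ?_
  rw [← take_drop_flatMap_eq_getElem hB.length_eq ht, hy, hstart,
    ← take_drop_eq_take_drop_add_of_square (i := s * n + (n - r)) (len := n) (by omega)
      (by omega)]

theorem getElem_eq_getElem_add_of_block_inside_left (hB : IsBrinkhuisTriple n k B) (hn : 0 < n)
    (hy : l.flatMap (uncurry B) = a ++ x ++ x ++ b) {q : ℕ} (hL : x.length = q * n) {t : ℕ}
    (h₁ : t < l.length) (h₂ : t + q < l.length) (ht₁ : a.length ≤ t * n)
    (ht₂ : t * n + n ≤ a.length + x.length) : l[t] = l[t + q] := by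
  refine hB.injective_uncurry hn ?_
  rw [← take_drop_flatMap_eq_getElem hB.length_eq h₁,
    ← take_drop_flatMap_eq_getElem hB.length_eq h₂, hy,
    take_drop_eq_take_drop_add_of_square ht₁ ht₂, hL, add_mul]

/-- If `|x| = q n` and `x x` starts inside block `c`, the two copies of `x` meet inside block
`c + q`, which is glued from pieces of its translates by `± |x|`. -/
theorem block_eq_take_append_drop_of_square (hB : IsBrinkhuisTriple n k B)
    (hy : l.flatMap (uncurry B) = a ++ x ++ x ++ b) {q c ρ : ℕ} (hq : 0 < q)
    (hL : x.length = q * n) (hp : a.length = c * n + ρ) (hρn : ρ < n)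
    (hc : c + 2 * q < l.length) :
    uncurry B l[c + q] = (uncurry B l[c + 2 * q]).take ρ ++ (uncurry B l[c]).drop ρ := by
  have hqn : n ≤ q * n := Nat.le_mul_of_pos_left n hq
  have hleft : (uncurry B l[c + q]).take ρ = (uncurry B l[c + 2 * q]).take ρ := by
    rw [← take_drop_flatMap_eq_getElem hB.length_eq, ← take_drop_flatMap_eq_getElem hB.length_eq,
      List.take_take, List.take_take, hy,
      take_drop_eq_take_drop_add_of_square (by rw [add_mul]; omega)
        (by rw [min_eq_left hρn.le, add_mul]; omega), hL, ← add_mul, add_assoc, ← two_mul]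
  have hright : (uncurry B l[c + q]).drop ρ = (uncurry B l[c]).drop ρ := by
    rw [← take_drop_flatMap_eq_getElem hB.length_eq, ← take_drop_flatMap_eq_getElem hB.length_eq,
      List.drop_take, List.drop_take, List.drop_drop, List.drop_drop, hy,
      show (c + q) * n + ρ = c * n + ρ + x.length by rw [hL, add_mul]; omega]
    exact (take_drop_eq_take_drop_add_of_square (by omega) (by omega)).symm
  rw [← hleft, ← hright, List.take_append_drop]

theorem flatMap_ne_square_of_length_eq_mul (hB : IsBrinkhuisTriple n k B) (hn : 0 < n)
    (hl : IsSquarefreeWord (l.map Prod.fst)) {q : ℕ} (hq : 0 < q) (hL : x.length = q * n) :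
    l.flatMap (uncurry B) ≠ a ++ x ++ x ++ b := by
  intro hy
  have hlen := congrArg List.length hy
  simp only [length_flatMap_of_length_eq hB.length_eq, List.length_append] at hlen
  obtain ⟨c, ρ, hp, hρn⟩ : ∃ c ρ, a.length = c * n + ρ ∧ ρ < n :=
    ⟨_, _, (Nat.div_add_mod' a.length n).symm, Nat.mod_lt _ hn⟩
  have hqn : n ≤ q * n := Nat.le_mul_of_pos_left n hq
  have hm : (c + 2 * q) * n + ρ ≤ l.length * n := by rw [add_mul, mul_assoc]; omega
  have hc : c + 2 * q ≤ l.length := Nat.le_of_mul_le_mul_right (by omega) hn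
  have hsquare : ∀ c', c' + 2 * q ≤ l.length → (∀ t (h₁ : t < l.length) (h₂ : t + q < l.length),
      c' ≤ t → t < c' + q → l[t].1 = l[t + q].1) → False := fun c' hc' h =>
    not_isSquarefreeWord_of_getElem_eq hq (by simpa using hc') (fun t h₁ h₂ ht₁ ht₂ => by
      simpa using h t (by simpa using h₁) (by simpa using h₂) ht₁ ht₂) hl
  have hmid : ∀ t (h₁ : t < l.length) (h₂ : t + q < l.length), c < t → t < c + q →
      l[t].1 = l[t + q].1 := fun t h₁ h₂ ht₁ ht₂ => by
    have h₃ := Nat.mul_le_mul_right n (show c + 1 ≤ t by omega)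
    have h₄ := Nat.mul_le_mul_right n (show t + 1 ≤ c + q by omega)
    rw [add_mul, one_mul] at h₃ h₄
    rw [add_mul] at h₄
    rw [hB.getElem_eq_getElem_add_of_block_inside_left hn hy hL h₁ h₂ (by omega) (by omega)]
  by_cases h₀ : l[c].1 = l[c + q].1
  · refine hsquare c hc fun t h₁ h₂ ht₁ ht₂ => ?_
    rcases ht₁.eq_or_lt with rfl | ht₁
    · exact h₀
    · exact hmid t h₁ h₂ ht₁ ht₂
  have hρ : 0 < ρ := Nat.pos_of_ne_zero fun hρ => h₀ (by
    rw [hB.getElem_eq_getElem_add_of_block_inside_left hn hy hL _ _ (by omega) (by rw [hL]; omega)])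
  have hc' : c + 2 * q < l.length := Nat.lt_of_mul_lt_mul_right (a := n) (by omega)
  by_cases h₁ : l[c + q].1 = l[c + 2 * q].1
  · refine hsquare (c + 1) (by omega) fun t h₁' h₂ ht₁ ht₂ => ?_
    rcases (show t ≤ c + q by omega).eq_or_lt with rfl | ht₂
    · simpa [two_mul, add_assoc] using h₁
    · exact hmid t h₁' h₂ (by omega) ht₂
  exact hB.ne_take_append_drop hρn h₀ h₁
    (hB.block_eq_take_append_drop_of_square hy hq hL hp hρn hc')

theorem flatMap_ne_square_of_short (hB : IsBrinkhuisTriple n k B) (hn : 0 < n)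
    (hl : IsSquarefreeWord (l.map Prod.fst)) (hx : x ≠ [])
    (h₁ : ∀ t, a.length ≤ t * n → a.length + x.length < t * n + n)
    (h₂ : ∀ t, a.length + x.length ≤ t * n → a.length + 2 * x.length < t * n + n) :
    l.flatMap (uncurry B) ≠ a ++ x ++ x ++ b := by
  intro hy
  obtain ⟨c, ρ, hp, hρn⟩ : ∃ c ρ, a.length = c * n + ρ ∧ ρ < n :=
    ⟨_, _, (Nat.div_add_mod' a.length n).symm, Nat.mod_lt _ hn⟩
  have hwin : a.length + 2 * x.length ≤ c * n + 3 * n := by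
    rcases Nat.eq_zero_or_pos ρ with rfl | hρ
    · have := h₁ c (by omega)
      omega
    · have := h₁ (c + 1) (by rw [add_mul]; omega)
      have := h₂ (c + 2) (by rw [add_mul] at *; omega)
      rw [add_mul] at this
      omega
  have hsub : (l.drop c).take 3 <:+: l :=
    (List.take_prefix _ _).isInfix.trans (List.drop_suffix _ _).isInfix
  have hsf := hB.isSquarefreeWord_flatMap_of_length_le_three (hl.of_infix (hsub.map Prod.fst))
    (List.length_take_le _ _)
  rw [← take_drop_flatMap_mul hB.length_eq, hy] at hsf
  refine isSquarefreeWord_iff_infix.mp hsf x hx ?_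
  have hxx : x ++ x = ((a ++ x ++ x ++ b).drop a.length).take (2 * x.length) := by
    rw [List.append_assoc, List.append_assoc, List.drop_left, ← List.append_assoc,
      List.take_left' (by rw [List.length_append, two_mul])]
  rw [hxx]
  exact take_drop_infix_take_drop _ (by omega) (by omega)

theorem isSquarefreeWord_flatMap (hB : IsBrinkhuisTriple n k B) (hn : 0 < n)
    (hl : IsSquarefreeWord (l.map Prod.fst)) : IsSquarefreeWord (l.flatMap (uncurry B)) := by
  rintro x hx ⟨a, b, hy⟩
  obtain ⟨q, r, hL, hrn⟩ : ∃ q r, x.length = q * n + r ∧ r < n :=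
    ⟨_, _, (Nat.div_add_mod' x.length n).symm, Nat.mod_lt _ hn⟩
  rcases Nat.eq_zero_or_pos r with rfl | hr
  · refine hB.flatMap_ne_square_of_length_eq_mul hn hl (Nat.pos_of_ne_zero ?_) hL hy
    rintro rfl
    exact hx (List.length_eq_zero_iff.mp (by simpa using hL))
  by_cases h₁ : ∃ t, a.length ≤ t * n ∧ t * n + n ≤ a.length + x.length
  · obtain ⟨t, ht₁, ht₂⟩ := h₁
    exact hB.flatMap_ne_square_of_block_inside_left hl hL hr hrn ht₁ ht₂ hy
  by_cases h₂ : ∃ t, a.length + x.length ≤ t * n ∧ t * n + n ≤ a.length + 2 * x.length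
  · obtain ⟨t, ht₁, ht₂⟩ := h₂
    exact hB.flatMap_ne_square_of_block_inside_right hl hL hr hrn ht₁ ht₂ hy
  push Not at h₁ h₂
  exact hB.flatMap_ne_square_of_short hn hl hx h₁ h₂ hy

theorem pow_mul_sCount_le (hB : IsBrinkhuisTriple n k B) (hn : 0 < n) (m : ℕ) :
    k ^ m * sCount m ≤ sCount (m * n) := by
  let S : ℕ → Set (List (Fin 3)) := fun m => {w | w.length = m ∧ IsSquarefreeWord w}
  let T : Set (List (Fin k)) := {v | v.length = m}
  let Φ : List (Fin 3) × List (Fin k) → List (Fin 3) := fun wv =>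
    (wv.1.zip wv.2).flatMap (uncurry B)
  have hΦ : Set.MapsTo Φ (S m ×ˢ T) (S (m * n)) := by
    rintro ⟨w, v⟩ ⟨⟨hw, hsf⟩, hv : v.length = m⟩
    refine ⟨?_, hB.isSquarefreeWord_flatMap hn ?_⟩
    · simp [Φ, length_flatMap_of_length_eq hB.length_eq, hw, hv]
    · rwa [List.map_fst_zip (hw.trans hv.symm).le]
  have hinj : Set.InjOn Φ (S m ×ˢ T) := by
    rintro ⟨w, v⟩ ⟨⟨hw, -⟩, hv : v.length = m⟩ ⟨w', v'⟩ ⟨⟨hw', -⟩, hv' : v'.length = m⟩ h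
    have hzip := flatMap_injective hB.length_eq hn (hB.injective_uncurry hn) h
    have hlen : w.length = v.length ∧ w'.length = v'.length :=
      ⟨hw.trans hv.symm, hw'.trans hv'.symm⟩
    rw [Prod.mk.injEq]
    constructor
    · rw [← List.map_fst_zip hlen.1.le, ← List.map_fst_zip (l₂ := v') hlen.2.le, hzip]
    · rw [← List.map_snd_zip (l₁ := w) hlen.1.ge, ← List.map_snd_zip (l₁ := w') hlen.2.ge, hzip]
  calc k ^ m * sCount m = (S m ×ˢ T).ncard := by
        rw [Set.ncard_prod, ncard_setOf_length_eq, Fintype.card_fin, mul_comm]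
        rfl
    _ ≤ sCount (m * n) := Set.ncard_le_ncard_of_injOn Φ hΦ hinj
        ((List.finite_length_eq _ _).subset fun _ hw => hw.1)

theorem pow_sum_le_sCount (hB : IsBrinkhuisTriple n k B) (hn : 0 < n) (t : ℕ) :
    k ^ (∑ i ∈ Finset.range t, n ^ i) ≤ sCount (n ^ t) := by
  induction t with
  | zero =>
    rw [Finset.sum_range_zero, pow_zero, pow_zero]
    exact (Set.ncard_pos ((List.finite_length_eq _ _).subset fun _ hw => hw.1)).mpr
      ⟨[0], rfl, isSquarefreeWord_of_length_le_one le_rfl⟩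
  | succ t ih =>
    calc k ^ (∑ i ∈ Finset.range (t + 1), n ^ i)
        = k ^ n ^ t * k ^ (∑ i ∈ Finset.range t, n ^ i) := by
          rw [Finset.sum_range_succ, pow_add, mul_comm]
      _ ≤ k ^ n ^ t * sCount (n ^ t) := Nat.mul_le_mul_left _ ih
      _ ≤ sCount (n ^ (t + 1)) := by rw [pow_succ]; exact hB.pow_mul_sCount_le hn _

end IsBrinkhuisTriple

open Filter Topology in
theorem tendsto_geom_sum_div_pow {r : ℝ} (hr : 1 < r) :
    Tendsto (fun t : ℕ => (∑ i ∈ Finset.range t, r ^ i) / r ^ t) atTop (𝓝 (1 / (r - 1))) := by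
  have hinv : Tendsto (fun t : ℕ => (r ^ t)⁻¹) atTop (𝓝 0) :=
    tendsto_inv_atTop_zero.comp (tendsto_pow_atTop_atTop_of_one_lt hr)
  have hlim := ((tendsto_const_nhds (x := (1 : ℝ))).sub hinv).div_const (r - 1)
  rw [sub_zero] at hlim
  refine hlim.congr fun t => ?_
  have : r ^ t ≠ 0 := by positivity
  rw [geom_sum_eq hr.ne']
  field_simp

theorem brinkhuis_growth_lower_bound (n k : ℕ) (hn : 2 ≤ n)
    (B : Fin 3 → Fin k → List (Fin 3)) (hB : IsBrinkhuisTriple n k B)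
    (s : ℝ)
    (hs : Filter.Tendsto (fun m : ℕ => (sCount m : ℝ) ^ (1 / (m : ℝ)))
      Filter.atTop (nhds s)) :
    (k : ℝ) ^ ((1 : ℝ) / ((n : ℝ) - 1)) ≤ s := by
  have hn₁ : (1 : ℝ) < n := by exact_mod_cast hn
  have hsub := hs.comp (tendsto_pow_atTop_atTop_of_one_lt hn)
  have hexp := (tendsto_const_nhds (x := (k : ℝ))).rpow (tendsto_geom_sum_div_pow hn₁)
    (Or.inr (by simp only [one_div, inv_pos, sub_pos, hn₁]))
  refine le_of_tendsto_of_tendsto' hexp hsub fun t => ?_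
  have hbound : ((k ^ (∑ i ∈ Finset.range t, n ^ i) : ℕ) : ℝ) ≤ sCount (n ^ t) :=
    by exact_mod_cast hB.pow_sum_le_sCount (by omega) t
  calc (k : ℝ) ^ ((∑ i ∈ Finset.range t, (n : ℝ) ^ i) / (n : ℝ) ^ t)
      = ((k ^ (∑ i ∈ Finset.range t, n ^ i) : ℕ) : ℝ) ^ (1 / ((n ^ t : ℕ) : ℝ)) := by
        rw [Nat.cast_pow, ← Real.rpow_natCast_mul (Nat.cast_nonneg k)]
        push_cast
        rw [mul_one_div]
    _ ≤ (sCount (n ^ t) : ℝ) ^ (1 / ((n ^ t : ℕ) : ℝ)) :=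
        Real.rpow_le_rpow (by positivity) hbound (by positivity)
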